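/- arXiv:1902.00759 — 2 statements merged into one kernel-verified Lean document; each statement's English description precedes it below -/
import Mathlib

section
/- For every ξ ∈ ℓ^∞ \ c₀ there exists a Dunford–Schwartz operator T : ℓ^∞ → ℓ^∞ (i.e., a linear map contracting both the ℓ¹-norm on ℓ¹ and the sup-norm on ℓ^∞) such that the Cesàro averages A_n(T)(ξ) = (1/(n+1)) Σ_{k=0}^n T^k(ξ) fail to converge coordinate-wise, hence fail to converge in sup-norm. -/
open Filter Topology

noncomputable section

/-- Iterates of a linear map. -/
def lmPow {M : Type*} [AddCommGroup M] [Module ℂ M] (T : M →ₗ[ℂ] M) : ℕ → (M →ₗ[ℂ] M)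
  | 0 => LinearMap.id
  | k + 1 => T ∘ₗ lmPow T k
/-- boundedness of a complex sequence (membership in `ℓ^∞`). -/
def Bdd (ξ : ℕ → ℂ) : Prop := BddAbove (Set.range fun n => ‖ξ n‖)

/-- sup-norm of a sequence. -/
def supNorm (ξ : ℕ → ℂ) : ℝ := ⨆ n, ‖ξ n‖

/-- `ℓ¹`-norm of a sequence. -/
def l1Norm (ξ : ℕ → ℂ) : ℝ := ∑' n, ‖ξ n‖

/-- The non-increasing rearrangement of a bounded sequence, 0-indexed:
`rearr ξ n = inf { sup_{m ∉ F} |ξ m| : F ⊆ ℕ, |F| ≤ n }` (so `rearr ξ n = ξ*_{n+1}`). -/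
def rearr (ξ : ℕ → ℂ) (n : ℕ) : ℝ :=
  ⨅ F : {F : Finset ℕ // F.card ≤ n}, ⨆ m : {m : ℕ // m ∉ F.1}, ‖ξ m.1‖

/-- Hardy–Littlewood–Pólya submajorization of sequences. -/
def seqSubmaj (ξ η : ℕ → ℂ) : Prop :=
  ∀ m : ℕ, ∑ n ∈ Finset.range m, rearr ξ n ≤ ∑ n ∈ Finset.range m, rearr η n

/-- A symmetric sequence space: a nonzero linear subspace of `ℓ^∞` with a complete norm,
such that `ξ* ≤ η*`, `η ∈ E`, `ξ ∈ ℓ^∞` imply `ξ ∈ E` and `‖ξ‖_E ≤ ‖η‖_E`. -/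
structure SymSeqSpace where
  carrier : Set (ℕ → ℂ)
  nrm : (ℕ → ℂ) → ℝ
  bdd : ∀ ξ ∈ carrier, Bdd ξ
  nonzero : ∃ ξ ∈ carrier, ξ ≠ 0
  add_mem : ∀ ξ η, ξ ∈ carrier → η ∈ carrier → ξ + η ∈ carrier
  smul_mem : ∀ (c : ℂ) ξ, ξ ∈ carrier → c • ξ ∈ carrier
  nrm_add : ∀ ξ η, ξ ∈ carrier → η ∈ carrier → nrm (ξ + η) ≤ nrm ξ + nrm η
  nrm_smul : ∀ (c : ℂ) ξ, ξ ∈ carrier → nrm (c • ξ) = ‖c‖ * nrm ξ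
  nrm_pos : ∀ ξ ∈ carrier, ξ ≠ 0 → 0 < nrm ξ
  complete : ∀ f : ℕ → (ℕ → ℂ), (∀ k, f k ∈ carrier) →
    (∀ ε : ℝ, 0 < ε → ∃ N, ∀ j k, N ≤ j → N ≤ k → nrm (f j - f k) < ε) →
    ∃ g ∈ carrier, Filter.Tendsto (fun k => nrm (f k - g)) Filter.atTop (nhds 0)
  symm : ∀ ξ η, η ∈ carrier → Bdd ξ → (∀ n, rearr ξ n ≤ rearr η n) →
    ξ ∈ carrier ∧ nrm ξ ≤ nrm η

/-- A fully symmetric sequence space. -/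
structure FullySymSeqSpace extends SymSeqSpace where
  fullySymm : ∀ ξ η, η ∈ carrier → Bdd ξ → seqSubmaj ξ η → ξ ∈ carrier ∧ nrm ξ ≤ nrm η

/-- Separability of a symmetric sequence space. -/
def SepSeq (E : SymSeqSpace) : Prop :=
  ∃ D : Set (ℕ → ℂ), D.Countable ∧ D ⊆ E.carrier ∧
    ∀ ξ ∈ E.carrier, ∀ ε : ℝ, 0 < ε → ∃ η ∈ D, E.nrm (ξ - η) < ε
/-- A Dunford–Schwartz operator on sequence spaces: contracts the sup-norm on `ℓ^∞`
and the `ℓ¹`-norm on `ℓ¹`. -/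
def IsDSseq (T : (ℕ → ℂ) →ₗ[ℂ] (ℕ → ℂ)) : Prop :=
  (∀ ξ, Bdd ξ → Bdd (T ξ) ∧ supNorm (T ξ) ≤ supNorm ξ) ∧
  (∀ ξ, Summable (fun n => ‖ξ n‖) →
    Summable (fun n => ‖T ξ n‖) ∧ l1Norm (T ξ) ≤ l1Norm ξ)

/-- Cesàro averages of a sequence operator. -/
def cesaroSeq (T : (ℕ → ℂ) →ₗ[ℂ] (ℕ → ℂ)) (n : ℕ) (ξ : ℕ → ℂ) : ℕ → ℂ :=
  ((n : ℂ) + 1)⁻¹ • ∑ k ∈ Finset.range (n + 1), (lmPow T k) ξ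

/-!
Choose `δ > 0` and indices `p 0 < p 1 < ⋯` with `δ ≤ ‖ξ (p k)‖`. A weighted shift along the path
`p` with unimodular weights contracts both `ℓ¹` and `ℓ^∞` because `p` is injective, and the
weights can be chosen so that `ε 0 * T^k ξ (p 0) = (-1) ^ ⌊log_C k⌋ * ‖ξ (p k)‖`. For
`C ≥ 2 (M + δ) / δ`, where `M` bounds `‖ξ‖`, the block `[C^j, C^(j+1))` of constant sign outweighs
all earlier terms, so the Cesàro averages at `p 0` at `n + 1 = C^(j+1)` have sign `(-1)^j` and
size at least `δ / 2`.
-/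

def pathShift (p : ℕ → ℕ) (w : ℕ → ℂ) : (ℕ → ℂ) →ₗ[ℂ] (ℕ → ℂ) :=
  Function.ExtendByZero.linearMap ℂ p ∘ₗ LinearMap.pi fun k => w k • LinearMap.proj (p (k + 1))

section pathShift

variable {p : ℕ → ℕ} {w : ℕ → ℂ}

theorem pathShift_apply (p : ℕ → ℕ) (w : ℕ → ℂ) (η : ℕ → ℂ) :
    pathShift p w η = Function.extend p (fun k => w k * η (p (k + 1))) 0 := rfl

theorem pathShift_apply_self (hp : p.Injective) (η : ℕ → ℂ) (k : ℕ) :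
    pathShift p w η (p k) = w k * η (p (k + 1)) := by
  rw [pathShift_apply, hp.extend_apply]

theorem norm_pathShift_apply (η : ℕ → ℂ) (m : ℕ) :
    ‖pathShift p w η m‖ = Function.extend p (fun k => ‖w k‖ * ‖η (p (k + 1))‖) 0 m := by
  rw [pathShift_apply, Function.apply_extend norm]
  simp [Function.comp_def, Pi.zero_def]

theorem isDSseq_pathShift (hp : p.Injective) (hw : ∀ k, ‖w k‖ ≤ 1) : IsDSseq (pathShift p w) := by
  have hle : ∀ k (η : ℕ → ℂ), ‖w k‖ * ‖η (p (k + 1))‖ ≤ ‖η (p (k + 1))‖ := fun k η =>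
    mul_le_of_le_one_left (norm_nonneg _) (hw k)
  refine ⟨fun η hη => ?_, fun η hη => ?_⟩
  · have hbound : ∀ m, ‖pathShift p w η m‖ ≤ supNorm η := by
      intro m
      rw [norm_pathShift_apply]
      by_cases hm : ∃ k, p k = m
      · obtain ⟨k, rfl⟩ := hm
        rw [hp.extend_apply]
        exact (hle k η).trans (le_ciSup hη _)
      · rw [Function.extend_apply' _ _ _ hm]
        exact Real.iSup_nonneg fun _ => norm_nonneg _
    exact ⟨⟨_, Set.forall_mem_range.2 hbound⟩, ciSup_le hbound⟩
  · have hshift : Summable fun k => ‖η (p (k + 1))‖ :=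
      hη.comp_injective (hp.comp (add_left_injective 1))
    have hsum : Summable fun k => ‖w k‖ * ‖η (p (k + 1))‖ :=
      hshift.of_nonneg_of_le (fun _ => by positivity) (fun k => hle k η)
    simp only [l1Norm, norm_pathShift_apply]
    refine ⟨(summable_extend_zero hp).2 hsum, ?_⟩
    calc ∑' m, Function.extend p (fun k => ‖w k‖ * ‖η (p (k + 1))‖) 0 m
        = ∑' k, ‖w k‖ * ‖η (p (k + 1))‖ := tsum_extend_zero hp _
      _ ≤ ∑' k, ‖η (p (k + 1))‖ := hsum.tsum_le_tsum (fun k => hle k η) hshift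
      _ ≤ ∑' m, ‖η m‖ :=
        tsum_comp_le_tsum_of_inj hη (fun _ => norm_nonneg _) (hp.comp (add_left_injective 1))

theorem lmPow_pathShift_apply_self (hp : p.Injective) (η : ℕ → ℂ) (k i : ℕ) :
    lmPow (pathShift p w) k η (p i) = (∏ j ∈ Finset.range k, w (i + j)) * η (p (i + k)) := by
  induction k generalizing i with
  | zero => simp [lmPow]
  | succ k ih =>
    rw [lmPow, LinearMap.comp_apply, pathShift_apply_self hp, ih, Finset.prod_range_succ']
    simp only [add_zero, add_right_comm _ 1, add_assoc]
    ring

end pathShift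

theorem not_tendsto_of_le_neg_one_pow_mul {x : ℕ → ℝ} {N : ℕ → ℕ} (hN : Tendsto N atTop atTop)
    {c : ℝ} (hc : 0 < c) (h : ∀ j, c ≤ (-1) ^ j * x (N j)) (L : ℝ) :
    ¬ Tendsto x atTop (𝓝 L) := by
  intro hx
  have hsub := hx.comp hN
  have hdiff : Tendsto (fun j => x (N j) - x (N (j + 1))) atTop (𝓝 0) := by
    simpa using hsub.sub (hsub.comp (tendsto_add_atTop_nat 1))
  obtain ⟨j, hj⟩ := Metric.tendsto_atTop.1 hdiff (2 * c) (by linarith)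
  have hj := hj j le_rfl
  have h0 := h j
  have h1 := h (j + 1)
  rw [Real.dist_eq, sub_zero, abs_lt] at hj
  rw [pow_succ] at h1
  rcases neg_one_pow_eq_or ℝ j with hs | hs <;> rw [hs] at h0 h1 <;> linarith

theorem le_neg_one_pow_mul_sum_neg_one_pow_log {C : ℕ} (hC : 0 < C) {δ M : ℝ} {b : ℕ → ℝ}
    (hlow : ∀ k, δ ≤ b k) (hup : ∀ k, |b k| ≤ M) (j : ℕ) :
    δ * ((C : ℝ) ^ (j + 1) - C ^ j) - M * C ^ j ≤
      (-1) ^ j * ∑ k ∈ Finset.range (C ^ (j + 1)), (-1) ^ Nat.log C k * b k := by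
  have hle : C ^ j ≤ C ^ (j + 1) := Nat.pow_le_pow_right hC (by omega)
  rw [← Finset.sum_range_add_sum_Ico _ hle, mul_add]
  have hhead : |(-1) ^ j * ∑ k ∈ Finset.range (C ^ j), (-1) ^ Nat.log C k * b k| ≤ M * C ^ j := by
    rw [abs_mul, abs_neg_one_pow, one_mul]
    calc |∑ k ∈ Finset.range (C ^ j), (-1) ^ Nat.log C k * b k|
        ≤ ∑ k ∈ Finset.range (C ^ j), |(-1) ^ Nat.log C k * b k| := Finset.abs_sum_le_sum_abs _ _
      _ ≤ ∑ _k ∈ Finset.range (C ^ j), M :=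
        Finset.sum_le_sum fun k _ => by rw [abs_mul, abs_neg_one_pow, one_mul]; exact hup k
      _ = M * C ^ j := by simp [mul_comm]
  have hblock : δ * ((C : ℝ) ^ (j + 1) - C ^ j) ≤
      (-1) ^ j * ∑ k ∈ Finset.Ico (C ^ j) (C ^ (j + 1)), (-1) ^ Nat.log C k * b k := by
    rw [Finset.mul_sum]
    calc δ * ((C : ℝ) ^ (j + 1) - C ^ j) = ∑ _k ∈ Finset.Ico (C ^ j) (C ^ (j + 1)), δ := by
          simp [Nat.cast_sub hle, mul_comm]
      _ ≤ _ := Finset.sum_le_sum fun k hk => ?_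
    rw [Finset.mem_Ico] at hk
    rw [Nat.log_eq_of_pow_le_of_lt_pow hk.1 hk.2, ← mul_assoc, ← pow_add,
      Even.neg_one_pow ⟨j, rfl⟩, one_mul]
    exact hlow k
  linarith [neg_abs_le ((-1) ^ j * ∑ k ∈ Finset.range (C ^ j), (-1) ^ Nat.log C k * b k)]

theorem not_tendsto_average_neg_one_pow_log {C : ℕ} {δ M L : ℝ} {b : ℕ → ℝ} (hδ : 0 < δ)
    (hlow : ∀ k, δ ≤ b k) (hup : ∀ k, |b k| ≤ M) (hC : 2 * (M + δ) ≤ δ * C) :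
    ¬ Tendsto (fun N : ℕ => (N : ℝ)⁻¹ * ∑ k ∈ Finset.range N, (-1) ^ Nat.log C k * b k)
      atTop (𝓝 L) := by
  have hδM : δ ≤ M := (hlow 0).trans ((le_abs_self _).trans (hup 0))
  have hC1 : 1 < C := by exact_mod_cast (show (1 : ℝ) < C by nlinarith)
  refine not_tendsto_of_le_neg_one_pow_mul (N := fun j => C ^ (j + 1))
    ((tendsto_pow_atTop_atTop_of_one_lt hC1).comp (tendsto_add_atTop_nat 1))
    (half_pos hδ) (fun j => ?_) L
  have hCj : (0 : ℝ) < C ^ j := by positivity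
  have hsum := le_neg_one_pow_mul_sum_neg_one_pow_log (C := C) (by omega) hlow hup j
  simp only [Nat.cast_pow]
  rw [mul_left_comm, le_inv_mul_iff₀ (by positivity)]
  rw [pow_succ] at hsum ⊢
  nlinarith [mul_le_mul_of_nonneg_left hC hCj.le]

theorem prod_range_div_of_ne_zero {G₀ : Type*} [CommGroupWithZero G₀] {f : ℕ → G₀}
    (hf : ∀ k, f k ≠ 0) (n : ℕ) : ∏ i ∈ Finset.range n, f (i + 1) / f i = f n / f 0 :=
  Finset.prod_range_induction _ (fun n => f n / f 0) (div_self (hf 0)) n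
    fun k _ => by rw [mul_comm, div_mul_div_cancel₀ (hf k)]

theorem exists_strictMono_le_norm_of_not_tendsto_zero {E : Type*} [SeminormedAddCommGroup E]
    {f : ℕ → E} (h : ¬ Tendsto f atTop (𝓝 0)) :
    ∃ δ > 0, ∃ p : ℕ → ℕ, StrictMono p ∧ ∀ k, δ ≤ ‖f (p k)‖ := by
  obtain ⟨s, hs, hfreq⟩ := not_tendsto_iff_exists_frequently_notMem.1 h
  obtain ⟨δ, hδ, hball⟩ := Metric.mem_nhds_iff.1 hs
  refine ⟨δ, hδ, extraction_of_frequently_atTop (P := fun n => δ ≤ ‖f n‖) (hfreq.mono fun n hn => ?_)⟩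
  by_contra! hlt
  exact hn (hball (mem_ball_zero_iff.2 hlt))

theorem mul_cesaroSeq_pathShift_div_apply {p : ℕ → ℕ} (hp : p.Injective) {ε : ℕ → ℂ}
    (hε : ∀ k, ε k ≠ 0) (ξ : ℕ → ℂ) (n : ℕ) :
    ε 0 * cesaroSeq (pathShift p fun j => ε (j + 1) / ε j) n ξ (p 0) =
      ((n : ℂ) + 1)⁻¹ * ∑ k ∈ Finset.range (n + 1), ε k * ξ (p k) := by
  have hiter : ∀ k, ε 0 * lmPow (pathShift p fun j => ε (j + 1) / ε j) k ξ (p 0) = ε k * ξ (p k) :=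
    fun k => by
      rw [lmPow_pathShift_apply_self hp]
      simp only [zero_add]
      rw [prod_range_div_of_ne_zero hε, ← mul_assoc, mul_div_cancel₀ _ (hε 0)]
  simp only [cesaroSeq, Pi.smul_apply, Finset.sum_apply, smul_eq_mul, mul_left_comm (ε 0),
    Finset.mul_sum, hiter]

/-- for every `ξ ∈ ℓ^∞ \ c₀` there is a Dunford–Schwartz operator on sequences
whose Cesàro averages at `ξ` do not converge coordinate-wise. -/
theorem stmt7 (ξ : ℕ → ℂ) (hb : Bdd ξ) (hnc : ¬ Tendsto (fun n => ξ n) atTop (nhds 0)) :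
    ∃ T : (ℕ → ℂ) →ₗ[ℂ] (ℕ → ℂ), IsDSseq T ∧
      ¬ ∃ η : ℕ → ℂ, ∀ m, Tendsto (fun n => cesaroSeq T n ξ m) atTop (nhds (η m)) := by
  obtain ⟨δ, hδ, p, hp, hpδ⟩ := exists_strictMono_le_norm_of_not_tendsto_zero hnc
  obtain ⟨M, hM⟩ := hb
  obtain ⟨C, hC⟩ := exists_nat_ge (2 * (M + δ) / δ)
  have hξ : ∀ k, ξ (p k) ≠ 0 := fun k => norm_pos_iff.1 (hδ.trans_le (hpδ k))
  let ε : ℕ → ℂ := fun k => (-1) ^ Nat.log C k * ‖ξ (p k)‖ / ξ (p k)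
  have hε : ∀ k, ‖ε k‖ = 1 := fun k => by simp [ε, hξ k]
  have hε0 : ∀ k, ε k ≠ 0 := fun k => norm_ne_zero_iff.1 (by simp [hε k])
  refine ⟨pathShift p fun j => ε (j + 1) / ε j,
    isDSseq_pathShift hp.injective fun j => by rw [norm_div, hε, hε, div_one], ?_⟩
  rintro ⟨η, hη⟩
  have hcesaro : ∀ n, ε 0 * cesaroSeq (pathShift p fun j => ε (j + 1) / ε j) n ξ (p 0) =
      (((n + 1 : ℕ) : ℝ)⁻¹ * ∑ k ∈ Finset.range (n + 1), (-1) ^ Nat.log C k * ‖ξ (p k)‖ : ℝ) :=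
    fun n => by
      simp only [mul_cesaroSeq_pathShift_div_apply hp.injective hε0, ε, div_mul_cancel₀ _ (hξ _)]
      push_cast
      rfl
  refine not_tendsto_average_neg_one_pow_log (C := C) hδ hpδ (fun k => by simpa using hM ⟨p k, rfl⟩)
    (by rw [div_le_iff₀ hδ] at hC; linarith) (L := (ε 0 * η (p 0)).re) ?_
  rw [← tendsto_add_atTop_iff_nat 1]
  have := (Complex.continuous_re.tendsto _).comp ((hη (p 0)).const_mul (ε 0))
  simpa only [Function.comp_def, hcesaro, Complex.ofReal_re] using this
end
end

section
/- For every bounded non-compact operator x on an infinite-dimensional Hilbert space H, there exists a Dunford–Schwartz operator T on B(H) such that the Cesàro averages A_n(T)(x) do not converge in operator norm. -/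
open Filter Topology

noncomputable section

variable {H : Type*} [NormedAddCommGroup H] [InnerProductSpace ℂ H] [CompleteSpace H]

/-- The `n`-th singular value (approximation number) of a bounded operator, 0-indexed:
`sVal x n` is the distance from `x` to the operators of rank at most `n`.  For a compact
operator `x` this equals the `(n+1)`-st singular value `s_{n+1}(x)` (eigenvalues of `|x|`
in decreasing order with multiplicity, padded with zeros). -/
def sVal (x : H →L[ℂ] H) (n : ℕ) : ℝ :=
  ⨅ F : {F : H →L[ℂ] H // Module.rank ℂ (LinearMap.range (F : H →ₗ[ℂ] H)) ≤ (n : Cardinal)},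
    ‖x - F.1‖

/-- Compactness of a bounded operator. -/
def IsCpt (x : H →L[ℂ] H) : Prop := IsCompactOperator (⇑x)

/-- Hardy–Littlewood–Pólya submajorization `y ≺≺ x` for operators. -/
def Submaj (y x : H →L[ℂ] H) : Prop :=
  ∀ m : ℕ, ∑ n ∈ Finset.range m, sVal y n ≤ ∑ n ∈ Finset.range m, sVal x n

/-- The trace norm, via singular values. -/
def traceNorm (x : H →L[ℂ] H) : ℝ := ∑' n, sVal x n

/-- A Dunford–Schwartz operator on `B(H)`: a linear map contracting the operator norm
and contracting the trace norm on the trace class. -/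
def IsDS (T : (H →L[ℂ] H) →ₗ[ℂ] (H →L[ℂ] H)) : Prop :=
  (∀ x : H →L[ℂ] H, ‖T x‖ ≤ ‖x‖) ∧
  ∀ x : H →L[ℂ] H, Summable (sVal x) →
    Summable (sVal (T x)) ∧ traceNorm (T x) ≤ traceNorm x

/-- Cesàro averages `A_n(T)(x) = (1/(n+1)) ∑_{k=0}^n T^k x`. -/
def cesaro (T : (H →L[ℂ] H) →ₗ[ℂ] (H →L[ℂ] H)) (n : ℕ) (x : H →L[ℂ] H) : H →L[ℂ] H :=
  ((n : ℂ) + 1)⁻¹ • ∑ k ∈ Finset.range (n + 1), (lmPow T k) x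

/-- The singular value sequence of an operator, as a complex sequence. -/
def svalC (x : H →L[ℂ] H) : ℕ → ℂ := fun n => (sVal x n : ℂ)

/-- Positivity of an operator on a Hilbert space. -/
def IsPosOp (x : H →L[ℂ] H) : Prop :=
  IsSelfAdjoint x ∧ ∀ v : H, 0 ≤ (@inner ℂ H _ (x v) v).re

/-!
A non-compact `x` stays bounded below by some `δ > 0` on unit vectors orthogonal to any
finite-dimensional subspace `K`, for otherwise it is a norm limit of the finite-rank operators
`x ∘ P_K`. This yields an orthonormal sequence `e` with `δ < ‖x (e j)‖`. Let `u` be the contraction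
with `u (e j) = λⱼ • e j`, `λⱼ = j / (j + 1)`, and `T z = z * u`: right multiplication by a
contraction does not increase approximation numbers, so `T` is Dunford–Schwartz. Now
`A_n(T)(x) (e j) = c_n(λⱼ) • x (e j)` with `c_n(λ) = (n + 1)⁻¹ ∑_{k ≤ n} λ^k`, hence
`δ |c_n(λⱼ) - c_m(λⱼ)| ≤ ‖A_n(T)(x) - A_m(T)(x)‖`. As `c_m(λⱼ) → 0` when `m → ∞` while
`c_n(λⱼ) → 1` when `j → ∞`, the averages are not even Cauchy.
-/

theorem exists_seq_forall_image_range {α : Type*} [DecidableEq α] {P : Finset α → α → Prop}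
    (h : ∀ s, ∃ a, P s a) : ∃ a : ℕ → α, ∀ n, P ((Finset.range n).image a) (a n) := by
  choose f hf using h
  let S : ℕ → Finset α := fun n => Nat.rec ∅ (fun _ s => insert (f s) s) n
  refine ⟨fun n => f (S n), fun n => ?_⟩
  suffices hS : ∀ n, S n = (Finset.range n).image fun k => f (S k) by rw [← hS]; exact hf _
  intro n
  induction n with
  | zero => rfl
  | succ n ih =>
    rw [Finset.range_add_one, Finset.image_insert, ← ih]

section NonCompact

variable {𝕜 E F : Type*} [RCLike 𝕜] [NormedAddCommGroup E] [InnerProductSpace 𝕜 E]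
  [NormedAddCommGroup F] [NormedSpace 𝕜 F] [CompleteSpace F]

theorem isCompactOperator_of_forall_exists_finiteDimensional (x : E →L[𝕜] F)
    (h : ∀ ε > 0, ∃ K : Submodule 𝕜 E, FiniteDimensional 𝕜 K ∧
      ∀ v ∈ Kᗮ, ‖v‖ = 1 → ‖x v‖ ≤ ε) :
    IsCompactOperator x := by
  choose K hK hxK using fun n : ℕ => h (1 / (n + 1)) Nat.one_div_pos_of_nat
  have hdist (n : ℕ) : ‖x - x ∘L (K n).starProjection‖ ≤ 1 / (n + 1) := by
    have hperp : ‖x ∘L (K n)ᗮ.subtypeL‖ ≤ 1 / (n + 1) :=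
      ContinuousLinearMap.opNorm_le_of_unit_norm (by positivity) fun v hv => hxK n v v.2 hv
    refine ContinuousLinearMap.opNorm_le_bound _ (by positivity) fun v => ?_
    calc ‖(x - x ∘L (K n).starProjection) v‖
        = ‖(x ∘L (K n)ᗮ.subtypeL) ⟨(K n)ᗮ.starProjection v, by simp⟩‖ := by
          simp [Submodule.starProjection_orthogonal_val]
      _ ≤ 1 / (n + 1) * ‖(K n)ᗮ.starProjection v‖ :=
          ContinuousLinearMap.le_of_opNorm_le _ hperp _
      _ ≤ 1 / (n + 1) * ‖v‖ := by gcongr; exact (K n)ᗮ.norm_starProjection_apply_le v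
  refine isCompactOperator_of_tendsto (l := atTop) (F := fun n => x ∘L (K n).starProjection) ?_
    (Eventually.of_forall fun n => ?_)
  · rw [tendsto_iff_norm_sub_tendsto_zero]
    refine squeeze_zero (fun _ => norm_nonneg _) (fun n => ?_)
      tendsto_one_div_add_atTop_nhds_zero_nat
    rw [norm_sub_rev]
    exact hdist n
  · have : FiniteDimensional 𝕜 (K n) := hK n
    exact (isCompactOperator_of_locallyCompactSpace_dom
      (K n).orthogonalProjectionOnto).clm_comp (x ∘L (K n).subtypeL)

theorem exists_orthonormal_forall_lt_norm_apply {x : E →L[𝕜] F} (hx : ¬ IsCompactOperator x) :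
    ∃ δ > 0, ∃ e : ℕ → E, Orthonormal 𝕜 e ∧ ∀ j, δ < ‖x (e j)‖ := by
  classical
  obtain ⟨δ, hδ, hfar⟩ : ∃ δ > 0, ∀ K : Submodule 𝕜 E, FiniteDimensional 𝕜 K →
      ∃ v ∈ Kᗮ, ‖v‖ = 1 ∧ δ < ‖x v‖ := by
    contrapose! hx
    exact isCompactOperator_of_forall_exists_finiteDimensional x hx
  obtain ⟨e, he⟩ := exists_seq_forall_image_range
    (P := fun s v => v ∈ (Submodule.span 𝕜 (s : Set E))ᗮ ∧ ‖v‖ = 1 ∧ δ < ‖x v‖)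
    fun s => by simpa using hfar _ (FiniteDimensional.span_finset 𝕜 s)
  have horth {m n : ℕ} (hmn : m < n) : inner 𝕜 (e m) (e n) = 0 :=
    Submodule.inner_right_of_mem_orthogonal
      (Submodule.subset_span (by simpa using ⟨m, hmn, rfl⟩)) (he n).1
  refine ⟨δ, hδ, e, ⟨fun j => (he j).2.1, fun i j hij => ?_⟩, fun j => (he j).2.2⟩
  rcases hij.lt_or_gt with h | h
  · exact horth h
  · exact inner_eq_zero_symm.1 (horth h)

end NonCompact

section Diagonal

open scoped ENNReal

variable {𝕜 ι : Type*} [RCLike 𝕜] {p : ℝ≥0∞} [Fact (1 ≤ p)]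

def lpDiagonal (σ : ι → 𝕜) (hσ : ∀ i, ‖σ i‖ ≤ 1) :
    lp (fun _ : ι => 𝕜) p →L[𝕜] lp (fun _ : ι => 𝕜) p :=
  have hmul (f : lp (fun _ : ι => 𝕜) p) (i : ι) : ‖σ i * f i‖ ≤ ‖f i‖ := by
    rw [norm_mul]; exact mul_le_of_le_one_left (norm_nonneg _) (hσ i)
  LinearMap.mkContinuous
    { toFun f := ⟨fun i => σ i * f i, (lp.memℓp f).mono' (hmul f)⟩
      map_add' f g := by ext i; exact mul_add (σ i) (f i) (g i)
      map_smul' c f := by ext i; simp [mul_left_comm] }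
    1 fun f => by
      rw [one_mul]
      exact lp.norm_mono (zero_lt_one.trans_le Fact.out).ne' (hmul f)

theorem lpDiagonal_apply (σ : ι → 𝕜) (hσ : ∀ i, ‖σ i‖ ≤ 1)
    (f : lp (fun _ : ι => 𝕜) p) (i : ι) : lpDiagonal σ hσ f i = σ i * f i := rfl

theorem norm_lpDiagonal_le (σ : ι → 𝕜) (hσ : ∀ i, ‖σ i‖ ≤ 1) :
    ‖(lpDiagonal σ hσ : lp (fun _ : ι => 𝕜) p →L[𝕜] _)‖ ≤ 1 := by
  unfold lpDiagonal
  exact LinearMap.mkContinuous_norm_le _ zero_le_one _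

theorem lpDiagonal_single [DecidableEq ι] (σ : ι → 𝕜) (hσ : ∀ i, ‖σ i‖ ≤ 1) (i : ι) :
    lpDiagonal σ hσ (lp.single p i 1) = σ i • lp.single p i 1 := by
  ext k
  by_cases hk : k = i
  · subst hk; simp [lpDiagonal_apply]
  · simp [lpDiagonal_apply, hk]

variable {E : Type*} [NormedAddCommGroup E] [InnerProductSpace 𝕜 E]

theorem HilbertBasis.exists_norm_le_one_apply_eq_smul (b : HilbertBasis ι 𝕜 E) (σ : ι → 𝕜)
    (hσ : ∀ i, ‖σ i‖ ≤ 1) : ∃ u : E →L[𝕜] E, ‖u‖ ≤ 1 ∧ ∀ i, u (b i) = σ i • b i := by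
  classical
  refine ⟨(b.repr.symm.toContinuousLinearEquiv : lp (fun _ : ι => 𝕜) 2 →L[𝕜] E) ∘L
    lpDiagonal σ hσ ∘L (b.repr.toContinuousLinearEquiv : E →L[𝕜] lp (fun _ : ι => 𝕜) 2),
    ContinuousLinearMap.opNorm_le_bound _ zero_le_one fun v => ?_, fun i => ?_⟩
  · calc ‖b.repr.symm (lpDiagonal σ hσ (b.repr v))‖ = ‖lpDiagonal σ hσ (b.repr v)‖ :=
          b.repr.symm.norm_map _
      _ ≤ 1 * ‖b.repr v‖ := (ContinuousLinearMap.le_opNorm _ _).trans (by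
          gcongr; exact norm_lpDiagonal_le σ hσ)
      _ = 1 * ‖v‖ := by rw [b.repr.norm_map]
  · show b.repr.symm (lpDiagonal σ hσ (b.repr (b i))) = σ i • b i
    rw [b.repr_self, lpDiagonal_single, map_smul, b.repr_symm_single]

theorem Orthonormal.exists_norm_le_one_apply_eq_smul [CompleteSpace E] {e : ι → E}
    (he : Orthonormal 𝕜 e) (σ : ι → 𝕜) (hσ : ∀ i, ‖σ i‖ ≤ 1) :
    ∃ u : E →L[𝕜] E, ‖u‖ ≤ 1 ∧ ∀ i, u (e i) = σ i • e i := by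
  obtain ⟨w, b, hew, hb⟩ := he.toSubtypeRange.exists_hilbertBasis_extension
  let f : ι → w := fun i => ⟨e i, hew ⟨i, rfl⟩⟩
  have hf : Function.Injective f := fun i j hij =>
    he.linearIndependent.injective (congrArg Subtype.val hij)
  obtain ⟨u, hu, hub⟩ := b.exists_norm_le_one_apply_eq_smul (Function.extend f σ 0) fun k => by
    by_cases hk : ∃ i, f i = k
    · obtain ⟨i, rfl⟩ := hk
      rw [hf.extend_apply]
      exact hσ i
    · simp [Function.extend_apply' _ _ _ hk]
  refine ⟨u, hu, fun i => ?_⟩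
  have hbf : b (f i) = e i := by rw [hb]
  rw [← hbf, hub, hf.extend_apply]

end Diagonal

section Cesaro

variable {𝕜 : Type*} [RCLike 𝕜]

def cesaroPow (c : 𝕜) (n : ℕ) : 𝕜 :=
  ((n : 𝕜) + 1)⁻¹ * ∑ k ∈ Finset.range (n + 1), c ^ k

theorem cesaroPow_one (n : ℕ) : cesaroPow (1 : 𝕜) n = 1 := by
  simp only [cesaroPow, one_pow, Finset.sum_const, Finset.card_range, nsmul_eq_mul, mul_one]
  push_cast
  exact inv_mul_cancel₀ (Nat.cast_add_one_ne_zero n)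

theorem continuous_cesaroPow (n : ℕ) : Continuous fun c : 𝕜 => cesaroPow c n := by
  unfold cesaroPow
  fun_prop

theorem tendsto_cesaroPow_zero {c : 𝕜} (hc : ‖c‖ < 1) : Tendsto (cesaroPow c) atTop (𝓝 0) := by
  refine (((tendsto_pow_atTop_nhds_zero_of_norm_lt_one hc).cesaro_smul).comp
    (tendsto_add_atTop_nat 1)).congr fun n => ?_
  simp [cesaroPow, RCLike.real_smul_eq_coe_mul]

end Cesaro

theorem not_cauchySeq_of_forall_mul_norm_sub_le_dist {X 𝕜 : Type*} [PseudoMetricSpace X]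
    [NormedField 𝕜] {A : ℕ → X} {c : ℕ → ℕ → 𝕜} {δ : ℝ} (hδ : 0 < δ)
    (hA : ∀ j n m, δ * ‖c j n - c j m‖ ≤ dist (A n) (A m))
    (hc₀ : ∀ j, Tendsto (c j) atTop (𝓝 0)) (hc₁ : ∀ n, Tendsto (c · n) atTop (𝓝 1)) :
    ¬ CauchySeq A := by
  intro hA_cauchy
  obtain ⟨N, hN⟩ := Metric.cauchySeq_iff'.1 hA_cauchy (δ / 2) (by positivity)
  have hcN (j : ℕ) : ‖c j N‖ ≤ 1 / 2 := by
    have hlim : Tendsto (fun m => ‖c j m - c j N‖) atTop (𝓝 ‖c j N‖) := by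
      simpa using ((hc₀ j).sub_const (c j N)).norm
    refine le_of_tendsto hlim (eventually_atTop.2 ⟨N, fun m hm => ?_⟩)
    have := (hA j m N).trans (hN m hm).le
    nlinarith
  have := le_of_tendsto (hc₁ N).norm (Eventually.of_forall hcN)
  norm_num at this

theorem lmPow_eq_pow {M : Type*} [AddCommGroup M] [Module ℂ M] (T : M →ₗ[ℂ] M) (k : ℕ) :
    lmPow T k = T ^ k := by
  induction k with
  | zero => rfl
  | succ k ih => rw [pow_succ', Module.End.mul_eq_comp, ← ih]; rfl

section Operators

variable {E : Type*} [NormedAddCommGroup E] [InnerProductSpace ℂ E]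

theorem sVal_nonneg (x : E →L[ℂ] E) (n : ℕ) : 0 ≤ sVal x n :=
  Real.iInf_nonneg fun _ => norm_nonneg _

theorem sVal_mul_le (z : E →L[ℂ] E) {u : E →L[ℂ] E} (hu : ‖u‖ ≤ 1) (n : ℕ) :
    sVal (z * u) n ≤ sVal z n := by
  have : Nonempty {F : E →L[ℂ] E // Module.rank ℂ (LinearMap.range (F : E →ₗ[ℂ] E)) ≤ n} :=
    ⟨⟨0, by simp⟩⟩
  refine le_ciInf fun F => ?_
  have hFu : Module.rank ℂ (LinearMap.range ((F.1 * u : E →L[ℂ] E) : E →ₗ[ℂ] E)) ≤ n :=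
    (Submodule.rank_mono (LinearMap.range_comp_le_range _ _)).trans F.2
  have hbdd : BddBelow (Set.range fun G : {F : E →L[ℂ] E //
      Module.rank ℂ (LinearMap.range (F : E →ₗ[ℂ] E)) ≤ n} => ‖z * u - G.1‖) :=
    ⟨0, by rintro _ ⟨G, rfl⟩; exact norm_nonneg _⟩
  calc sVal (z * u) n ≤ ‖z * u - F.1 * u‖ := ciInf_le hbdd ⟨F.1 * u, hFu⟩
    _ = ‖(z - F.1) * u‖ := by rw [sub_mul]
    _ ≤ ‖z - F.1‖ := (norm_mul_le _ _).trans (mul_le_of_le_one_right (norm_nonneg _) hu)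

theorem isDS_mulRight {u : E →L[ℂ] E} (hu : ‖u‖ ≤ 1) : IsDS (LinearMap.mulRight ℂ u) := by
  refine ⟨fun z => (norm_mul_le z u).trans (mul_le_of_le_one_right (norm_nonneg _) hu),
    fun z hz => ?_⟩
  have hsum : Summable (sVal (z * u)) :=
    hz.of_nonneg_of_le (sVal_nonneg _) fun n => sVal_mul_le z hu n
  exact ⟨hsum, hsum.tsum_le_tsum (fun n => sVal_mul_le z hu n) hz⟩

theorem cesaro_mulRight_apply_of_apply_eq_smul (x : E →L[ℂ] E) {u : E →L[ℂ] E} {v : E} {c : ℂ}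
    (hv : u v = c • v) (n : ℕ) :
    cesaro (LinearMap.mulRight ℂ u) n x v = cesaroPow c n • x v := by
  have hpow (k : ℕ) : (u ^ k) v = c ^ k • v := by
    induction k with
    | zero => simp
    | succ k ih => rw [pow_succ', mul_apply_eq_comp, ih, map_smul, hv, smul_smul, pow_succ]
  simp only [cesaro, cesaroPow, lmPow_eq_pow, LinearMap.pow_mulRight, LinearMap.mulRight_apply,
    smul_apply, sum_apply, mul_apply_eq_comp, hpow, map_smul, mul_smul, Finset.sum_smul]

theorem mul_norm_sub_cesaroPow_le_dist_cesaro (x : E →L[ℂ] E) {u : E →L[ℂ] E} {v : E}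
    (hv_norm : ‖v‖ = 1) {c : ℂ} (hv : u v = c • v) {δ : ℝ} (hδ : δ ≤ ‖x v‖) (n m : ℕ) :
    δ * ‖cesaroPow c n - cesaroPow c m‖ ≤
      dist (cesaro (LinearMap.mulRight ℂ u) n x) (cesaro (LinearMap.mulRight ℂ u) m x) := by
  set A := cesaro (LinearMap.mulRight ℂ u)
  calc δ * ‖cesaroPow c n - cesaroPow c m‖ ≤ ‖cesaroPow c n - cesaroPow c m‖ * ‖x v‖ := by
        rw [mul_comm]; gcongr
    _ = ‖(A n x - A m x) v‖ := by
        rw [sub_apply, cesaro_mulRight_apply_of_apply_eq_smul x hv,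
          cesaro_mulRight_apply_of_apply_eq_smul x hv, ← sub_smul, norm_smul]
    _ ≤ ‖A n x - A m x‖ := by simpa [hv_norm] using (A n x - A m x).le_opNorm v
    _ = dist (A n x) (A m x) := (dist_eq_norm _ _).symm

end Operators

/-- for every bounded non-compact operator `x` there is a Dunford–Schwartz
operator `T` such that `A_n(T)(x)` does not converge in operator norm. -/
theorem stmt8 {H : Type*} [NormedAddCommGroup H] [InnerProductSpace ℂ H] [CompleteSpace H]
    (x : H →L[ℂ] H) (hx : ¬ IsCpt x) :
    ∃ T : (H →L[ℂ] H) →ₗ[ℂ] (H →L[ℂ] H), IsDS T ∧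
      ¬ ∃ xhat : H →L[ℂ] H, Tendsto (fun n => ‖cesaro T n x - xhat‖) atTop (nhds 0) := by
  obtain ⟨δ, hδ, e, he, hxe⟩ := exists_orthonormal_forall_lt_norm_apply hx
  let l : ℕ → ℂ := fun j => j / (j + 1)
  have hl (j : ℕ) : ‖l j‖ < 1 := by
    have : ‖l j‖ = j / (j + 1) := by
      simp only [l, Complex.norm_div, RCLike.norm_natCast]
      norm_cast
    rw [this, div_lt_one (by positivity)]
    linarith
  obtain ⟨u, hu, hue⟩ := he.exists_norm_le_one_apply_eq_smul l fun j => (hl j).le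
  refine ⟨LinearMap.mulRight ℂ u, isDS_mulRight hu, ?_⟩
  rintro ⟨xhat, hconv⟩
  refine not_cauchySeq_of_forall_mul_norm_sub_le_dist hδ (c := fun j => cesaroPow (l j))
    (fun j n m => ?_) (fun j => tendsto_cesaroPow_zero (hl j)) (fun n => ?_)
    (tendsto_iff_norm_sub_tendsto_zero.2 hconv).cauchySeq
  · exact mul_norm_sub_cesaroPow_le_dist_cesaro x (he.1 j) (hue j) (hxe j).le n m
  · have := ((continuous_cesaroPow n).tendsto 1).comp (tendsto_natCast_div_add_atTop (1 : ℂ))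
    rwa [cesaroPow_one] at this
end
end
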